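/- Let H be a complex Hilbert space with group action κ, s ∈ ℝ, and let p : ℝ^q → ℝ be a continuous function such that c·⟨η⟩ ≤ p(η) ≤ C·⟨η⟩ for all η ∈ ℝ^q and some constants c, C > 0. Then there exist constants c', C' > 0 such that for all u ∈ 𝒮(ℝ^q, H): c' · ∫ ⟨η⟩^{2s} ‖κ_{⟨η⟩}^{−1} û(η)‖² dη ≤ ∫ p(η)^{2s} ‖κ_{p(η)}^{−1} û(η)‖² dη ≤ C' · ∫ ⟨η⟩^{2s} ‖κ_{⟨η⟩}^{−1} û(η)‖² dη; i.e. replacing ⟨η⟩ by any such function p (for instance p(η) = [η]) yields an equivalent norm on 𝒲^s(ℝ^q, H). -/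

import Mathlib

open MeasureTheory Complex
open scoped ENNReal NNReal

noncomputable section

/-- `ℝ^q` as a Euclidean space. -/
abbrev Eucl (q : ℕ) := EuclideanSpace ℝ (Fin q)

/-- The "Japanese bracket" `⟨η⟩ = (1+|η|²)^(1/2)`. -/
def jap {q : ℕ} (η : Eucl q) : ℝ := Real.sqrt (1 + ‖η‖ ^ 2)

/-- The Fourier transform `û(η) = ∫ e^{−i y·η} u(y) dy` of an `H`-valued function. -/
def ft {q : ℕ} {H : Type*} [NormedAddCommGroup H] [NormedSpace ℂ H]
    (u : Eucl q → H) (η : Eucl q) : H :=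
  ∫ y, Complex.exp (-Complex.I * ((inner ℝ y η : ℝ) : ℂ)) • u y

/-- A group action on a complex Banach/Hilbert space `H`: a family `κ_λ`, `λ > 0`, of bounded
invertible linear operators on `H` with `κ_λ ∘ κ_ν = κ_{λν}` which is strongly continuous. -/
structure GroupAction (H : Type*) [NormedAddCommGroup H] [NormedSpace ℂ H] where
  κ : ℝ → H ≃L[ℂ] H
  mul : ∀ ⦃l m : ℝ⦄, 0 < l → 0 < m → ∀ h : H, κ l (κ m h) = κ (l * m) h
  strong_cont : ∀ h : H, ContinuousOn (fun l => κ l h) (Set.Ioi (0 : ℝ))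

/-!
By the group law, `κ_{p(η)}⁻¹ = κ_{⟨η⟩/p(η)} ∘ κ_{⟨η⟩}⁻¹`, and the ratio `⟨η⟩/p(η)` ranges over
the compact interval `[C⁻¹, c⁻¹] ⊂ (0, ∞)`. On such an interval the strongly continuous family
`κ` is uniformly bounded by Banach–Steinhaus, and `(p(η)/⟨η⟩)^{2s}` is bounded above and below.
So the two integrands are comparable pointwise, with constants independent of `η` and `u`.
-/

lemma jap_pos {q : ℕ} (η : Eucl q) : 0 < jap η :=
  Real.sqrt_pos.mpr (by positivity)

lemma Real.rpow_le_max_of_mem_Icc {a b r : ℝ} (t : ℝ) (ha : 0 < a) (hr : r ∈ Set.Icc a b) :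
    r ^ t ≤ max (a ^ t) (b ^ t) := by
  rcases le_or_gt 0 t with ht | ht
  · exact (Real.rpow_le_rpow (ha.trans_le hr.1).le hr.2 ht).trans (le_max_right _ _)
  · exact (Real.rpow_le_rpow_of_nonpos ha hr.1 ht.le).trans (le_max_left _ _)

namespace GroupAction

variable {H : Type*} [NormedAddCommGroup H] [NormedSpace ℂ H] (ga : GroupAction H)

/-- The weight `λ^t ‖κ_λ⁻¹ x‖²` of the `𝒲^s`-integrand, with `t = 2s`, `λ = ⟨η⟩` and `x = û(η)`. -/
def weightedNormSq (t l : ℝ) (x : H) : ℝ≥0∞ :=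
  ENNReal.ofReal (l ^ t) * (‖(ga.κ l).symm x‖₊ : ℝ≥0∞) ^ 2

lemma apply_one (x : H) : ga.κ 1 x = x := by
  have h := ga.mul one_pos one_pos ((ga.κ 1).symm x)
  rwa [one_mul, (ga.κ 1).apply_symm_apply] at h

lemma symm_apply {l : ℝ} (hl : 0 < l) (x : H) : (ga.κ l).symm x = ga.κ l⁻¹ x := by
  rw [ContinuousLinearEquiv.symm_apply_eq, ga.mul hl (inv_pos.mpr hl),
    mul_inv_cancel₀ hl.ne', ga.apply_one]

lemma symm_apply_eq_apply_symm {l m : ℝ} (hl : 0 < l) (hm : 0 < m) (x : H) :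
    (ga.κ m).symm x = ga.κ (l / m) ((ga.κ l).symm x) := by
  rw [ga.symm_apply hm, ga.symm_apply hl, ga.mul (div_pos hl hm) (inv_pos.mpr hl)]
  congr 2
  field_simp

lemma exists_bound_of_mem_Icc [CompleteSpace H] {a b : ℝ} (ha : 0 < a) :
    ∃ M > 0, ∀ l ∈ Set.Icc a b, ∀ x : H, ‖ga.κ l x‖ ≤ M * ‖x‖ := by
  have hpointwise : ∀ x : H, ∃ B, ∀ l : Set.Icc a b, ‖(ga.κ l : H →L[ℂ] H) x‖ ≤ B := by
    intro x
    obtain ⟨B, hB⟩ := isCompact_Icc.exists_bound_of_continuousOn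
      ((ga.strong_cont x).mono fun l hl => ha.trans_le hl.1)
    exact ⟨B, fun l => hB l l.2⟩
  obtain ⟨M, hM⟩ := banach_steinhaus hpointwise
  refine ⟨max M 1, by positivity, fun l hl x => ?_⟩
  calc ‖ga.κ l x‖ ≤ ‖(ga.κ l : H →L[ℂ] H)‖ * ‖x‖ := (ga.κ l : H →L[ℂ] H).le_opNorm x
    _ ≤ max M 1 * ‖x‖ := by gcongr; exact (hM ⟨l, hl⟩).trans (le_max_left _ _)

lemma rpow_mul_norm_symm_sq_le {a b M l m : ℝ} (t : ℝ) (ha : 0 < a)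
    (hM : ∀ r ∈ Set.Icc b⁻¹ a⁻¹, ∀ x : H, ‖ga.κ r x‖ ≤ M * ‖x‖)
    (hl : 0 < l) (hlm : a * l ≤ m) (hml : m ≤ b * l) (x : H) :
    m ^ t * ‖(ga.κ m).symm x‖ ^ 2 ≤
      max (a ^ t) (b ^ t) * M ^ 2 * (l ^ t * ‖(ga.κ l).symm x‖ ^ 2) := by
  have hm : 0 < m := (mul_pos ha hl).trans_le hlm
  have hratio : m / l ∈ Set.Icc a b := ⟨(le_div_iff₀ hl).mpr hlm, (div_le_iff₀ hl).mpr hml⟩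
  have hweight : m ^ t ≤ max (a ^ t) (b ^ t) * l ^ t := by
    rw [← div_mul_cancel₀ m hl.ne', Real.mul_rpow (div_pos hm hl).le hl.le]
    gcongr
    exact Real.rpow_le_max_of_mem_Icc t ha hratio
  have hnorm : ‖(ga.κ m).symm x‖ ≤ M * ‖(ga.κ l).symm x‖ := by
    rw [ga.symm_apply_eq_apply_symm hl hm, ← inv_div]
    refine hM _ ⟨?_, ?_⟩ _
    · exact inv_anti₀ (div_pos hm hl) hratio.2
    · exact inv_anti₀ ha hratio.1
  calc m ^ t * ‖(ga.κ m).symm x‖ ^ 2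
      ≤ (max (a ^ t) (b ^ t) * l ^ t) * (M * ‖(ga.κ l).symm x‖) ^ 2 := by gcongr
    _ = _ := by ring

lemma exists_weightedNormSq_le [CompleteSpace H] {a b : ℝ} (t : ℝ) (ha : 0 < a) (hb : 0 < b) :
    ∃ K > 0, ∀ l m : ℝ, 0 < l → a * l ≤ m → m ≤ b * l → ∀ x : H,
      ga.weightedNormSq t m x ≤ ENNReal.ofReal K * ga.weightedNormSq t l x := by
  obtain ⟨M, hM, hbound⟩ := ga.exists_bound_of_mem_Icc (b := a⁻¹) (inv_pos.mpr hb)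
  have hmax : 0 < max (a ^ t) (b ^ t) := lt_max_of_lt_left (Real.rpow_pos_of_pos ha t)
  refine ⟨max (a ^ t) (b ^ t) * M ^ 2, by positivity, fun l m hl hlm hml x => ?_⟩
  have hm : 0 < m := (mul_pos ha hl).trans_le hlm
  simp only [weightedNormSq, ← ofReal_norm, ← enorm_eq_nnnorm,
    ← ENNReal.ofReal_pow (norm_nonneg _)]
  rw [← ENNReal.ofReal_mul (by positivity), ← ENNReal.ofReal_mul (by positivity),
    ← ENNReal.ofReal_mul (by positivity)]
  exact ENNReal.ofReal_le_ofReal (ga.rpow_mul_norm_symm_sq_le t ha hbound hl hlm hml x)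

end GroupAction

theorem stmt15_general {q : ℕ} (H : Type*) [NormedAddCommGroup H] [InnerProductSpace ℂ H]
    [CompleteSpace H] (ga : GroupAction H) (s : ℝ)
    (p : Eucl q → ℝ) (c C : ℝ) (hc : 0 < c) (hC : 0 < C)
    (hlow : ∀ η, c * jap η ≤ p η) (hup : ∀ η, p η ≤ C * jap η) :
    ∃ c' > (0 : ℝ), ∃ C' > (0 : ℝ), ∀ u : SchwartzMap (Eucl q) H,
      ENNReal.ofReal c' *
          (∫⁻ η, ENNReal.ofReal (jap η ^ (2 * s)) *
            ((‖(ga.κ (jap η)).symm (ft (⇑u) η)‖₊ : ℝ≥0∞) ^ 2))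
        ≤ (∫⁻ η, ENNReal.ofReal (p η ^ (2 * s)) *
            ((‖(ga.κ (p η)).symm (ft (⇑u) η)‖₊ : ℝ≥0∞) ^ 2)) ∧
      (∫⁻ η, ENNReal.ofReal (p η ^ (2 * s)) *
          ((‖(ga.κ (p η)).symm (ft (⇑u) η)‖₊ : ℝ≥0∞) ^ 2))
        ≤ ENNReal.ofReal C' *
          (∫⁻ η, ENNReal.ofReal (jap η ^ (2 * s)) *
            ((‖(ga.κ (jap η)).symm (ft (⇑u) η)‖₊ : ℝ≥0∞) ^ 2)) := by
  obtain ⟨K, hK, hpjap⟩ := ga.exists_weightedNormSq_le (2 * s) hc hC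
  obtain ⟨L, hL, hjapp⟩ := ga.exists_weightedNormSq_le (2 * s) (inv_pos.mpr hC) (inv_pos.mpr hc)
  have hjap_p : ∀ η, C⁻¹ * p η ≤ jap η ∧ jap η ≤ c⁻¹ * p η := fun η =>
    ⟨(inv_mul_le_iff₀ hC).mpr (hup η), (le_inv_mul_iff₀ hc).mpr (hlow η)⟩
  refine ⟨L⁻¹, inv_pos.mpr hL, K, hK, fun u => ⟨?_, ?_⟩⟩
  · rw [← lintegral_const_mul' _ _ ENNReal.ofReal_ne_top]
    refine lintegral_mono fun η => ?_
    have hp_pos : 0 < p η := (mul_pos hc (jap_pos η)).trans_le (hlow η)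
    calc ENNReal.ofReal L⁻¹ * ga.weightedNormSq (2 * s) (jap η) (ft u η)
        ≤ ENNReal.ofReal L⁻¹ * (ENNReal.ofReal L * ga.weightedNormSq (2 * s) (p η) (ft u η)) := by
          gcongr
          exact hjapp _ _ hp_pos (hjap_p η).1 (hjap_p η).2 _
      _ = ga.weightedNormSq (2 * s) (p η) (ft u η) := by
          rw [← mul_assoc, ← ENNReal.ofReal_mul (inv_nonneg.mpr hL.le), inv_mul_cancel₀ hL.ne',
            ENNReal.ofReal_one, one_mul]
  · rw [← lintegral_const_mul' _ _ ENNReal.ofReal_ne_top]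
    exact lintegral_mono fun η => hpjap _ _ (jap_pos η) (hlow η) (hup η) _

/-- Replacing `⟨η⟩` by any continuous `p` with `c⟨η⟩ ≤ p(η) ≤ C⟨η⟩` yields an equivalent
norm on `𝒲^s(ℝ^q, H)` (stated for squared norms of Schwartz functions). -/
theorem stmt15 {q : ℕ} (H : Type*) [NormedAddCommGroup H] [InnerProductSpace ℂ H]
    [CompleteSpace H] (ga : GroupAction H) (s : ℝ)
    (p : Eucl q → ℝ) (hp : Continuous p) (c C : ℝ) (hc : 0 < c) (hC : 0 < C)
    (hlow : ∀ η, c * jap η ≤ p η) (hup : ∀ η, p η ≤ C * jap η) :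
    ∃ c' > (0 : ℝ), ∃ C' > (0 : ℝ), ∀ u : SchwartzMap (Eucl q) H,
      ENNReal.ofReal c' *
          (∫⁻ η, ENNReal.ofReal (jap η ^ (2 * s)) *
            ((‖(ga.κ (jap η)).symm (ft (⇑u) η)‖₊ : ℝ≥0∞) ^ 2))
        ≤ (∫⁻ η, ENNReal.ofReal (p η ^ (2 * s)) *
            ((‖(ga.κ (p η)).symm (ft (⇑u) η)‖₊ : ℝ≥0∞) ^ 2)) ∧
      (∫⁻ η, ENNReal.ofReal (p η ^ (2 * s)) *
          ((‖(ga.κ (p η)).symm (ft (⇑u) η)‖₊ : ℝ≥0∞) ^ 2))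
        ≤ ENNReal.ofReal C' *
          (∫⁻ η, ENNReal.ofReal (jap η ^ (2 * s)) *
            ((‖(ga.κ (jap η)).symm (ft (⇑u) η)‖₊ : ℝ≥0∞) ^ 2)) :=
  stmt15_general H ga s p c C hc hC hlow hup
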